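/- The Trid function in dimension 10, f(x) = Σ_{i=1}^{10} (x_i − 1)² − Σ_{i=2}^{10} x_i·x_{i−1}, satisfies f(x) ≥ −210 for all x ∈ ℝ¹⁰, and equality holds at the point x* with coordinates x*_i = i·(11 − i) for i = 1,…,10; hence its global minimum value is −210. -/

import Mathlib

/-!
The quadratic part `Q(y) = ∑ yᵢ² - ∑ yᵢ₊₁ yᵢ` of the Trid function is half of
`y₁² + yₙ² + ∑ (yᵢ₊₁ - yᵢ)²`, hence positive semidefinite. The point `x*ᵢ = i (11 - i)` is a
critical point of the Trid function `f`, so `f (x* + y) = f x* + Q(y)` with `f x* = -210`.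
-/

open Finset

def tridiagForm {n : ℕ} (y : Fin (n + 1) → ℝ) : ℝ :=
  ∑ i, y i ^ 2 - ∑ i : Fin n, y i.succ * y i.castSucc

theorem two_mul_tridiagForm {n : ℕ} (y : Fin (n + 1) → ℝ) :
    2 * tridiagForm y =
      y 0 ^ 2 + y (Fin.last n) ^ 2 + ∑ i : Fin n, (y i.succ - y i.castSucc) ^ 2 := by
  have h_succ : ∑ i, y i ^ 2 = y 0 ^ 2 + ∑ i : Fin n, y i.succ ^ 2 := Fin.sum_univ_succ _
  have h_castSucc : ∑ i, y i ^ 2 = ∑ i : Fin n, y i.castSucc ^ 2 + y (Fin.last n) ^ 2 :=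
    Fin.sum_univ_castSucc _
  have h_expand : ∑ i : Fin n, (y i.succ - y i.castSucc) ^ 2 =
      ∑ i : Fin n, y i.succ ^ 2 + ∑ i : Fin n, y i.castSucc ^ 2
        - 2 * ∑ i : Fin n, y i.succ * y i.castSucc := by
    simp only [mul_sum, ← sum_add_distrib, ← sum_sub_distrib]
    exact sum_congr rfl fun i _ => by ring
  rw [tridiagForm]
  linarith

theorem tridiagForm_nonneg {n : ℕ} (y : Fin (n + 1) → ℝ) : 0 ≤ tridiagForm y := by
  have : 0 ≤ 2 * tridiagForm y := two_mul_tridiagForm y ▸ by positivity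
  linarith

def tridMinimizer : Fin 10 → ℝ := fun i => ((i : ℕ) + 1) * (11 - (((i : ℕ) : ℝ) + 1))

theorem trid_eq_tridiagForm_sub (x : Fin 10 → ℝ) :
    (∑ i : Fin 10, (x i - 1) ^ 2) - ∑ i : Fin 9, x i.succ * x i.castSucc =
      tridiagForm (x - tridMinimizer) - 210 := by
  simp only [tridiagForm, tridMinimizer, Pi.sub_apply, Fin.sum_univ_succ, Fin.sum_univ_zero]
  norm_num [Fin.succ, Fin.castSucc, Fin.castAdd, Fin.castLE]
  ring

theorem trid_min (f : (Fin 10 → ℝ) → ℝ)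
    (hf : ∀ x : Fin 10 → ℝ, f x =
      (∑ i : Fin 10, (x i - 1) ^ 2) - ∑ i : Fin 9, x i.succ * x i.castSucc) :
    (∀ x : Fin 10 → ℝ, f x ≥ -210) ∧
      f (fun i => ((i : ℕ) + 1) * (11 - (((i : ℕ) : ℝ) + 1))) = -210 := by
  refine ⟨fun x => ?_, ?_⟩
  · rw [hf, trid_eq_tridiagForm_sub]
    linarith [tridiagForm_nonneg (x - tridMinimizer)]
  · change f tridMinimizer = -210
    rw [hf, trid_eq_tridiagForm_sub, sub_self]
    simp [tridiagForm]
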